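/- For γ ∈ (0,1) and an absolutely continuous function w : [0,T] → ℝ, the Caputo fractional derivative satisfies the pointwise inequality (∂_t^γ w)(t) · w(t) ≥ (1/2) (∂_t^γ (w²))(t) for almost every t ∈ (0,T). -/

import Mathlib

open MeasureTheory intervalIntegral Set Metric Filter Topology

/-- Caputo fractional derivative of order `γ ∈ (0,1)`:
`∂_t^γ w(t) = (1/Γ(1-γ)) ∫₀ᵗ w'(s)/(t-s)^γ ds`. -/
noncomputable def caputo (γ : ℝ) (w : ℝ → ℝ) (t : ℝ) : ℝ :=
  (1 / Real.Gamma (1 - γ)) * ∫ s in (0:ℝ)..t, deriv w s / (t - s) ^ γ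



lemma lemA {T : ℝ} (hT : 0 < T) {w : ℝ → ℝ}
    (hac : ∀ t ∈ Icc (0:ℝ) T, w t = w 0 + ∫ s in (0:ℝ)..t, deriv w s)
    (hint : IntervalIntegrable (deriv w) volume 0 T) :
    ∀ᵐ x ∂(volume.restrict (Ioo (0:ℝ) T)), HasDerivAt w (deriv w x) x := by
  set g : ℝ → ℝ := (Ioo (0:ℝ) T).indicator (deriv w) with hgdef
  have hgi : Integrable g volume := by
    rw [integrable_indicator_iff measurableSet_Ioo]
    exact hint.1.mono_set Ioo_subset_Ioc_self
  have hloc := IsUnifLocDoublingMeasure.ae_tendsto_average_norm_sub (μ := volume)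
    hgi.locallyIntegrable 1
  filter_upwards [ae_restrict_of_ae hloc, ae_restrict_mem measurableSet_Ioo] with x hx hmem
  have hδ : Tendsto (fun y : ℝ => |y - x| / 2) (𝓝[≠] x) (𝓝[>] (0:ℝ)) := by
    rw [tendsto_nhdsWithin_iff]
    constructor
    · have : Tendsto (fun y : ℝ => |y - x| / 2) (𝓝 x) (𝓝 (|x - x|/2)) :=
        ((continuous_abs.comp (continuous_id.sub continuous_const)).div_const 2).tendsto x
      simp only [sub_self, abs_zero, zero_div] at this
      exact this.mono_left nhdsWithin_le_nhds
    · filter_upwards [self_mem_nhdsWithin] with y hy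
      have h0 : y - x ≠ 0 := sub_ne_zero.2 hy
      have : 0 < |y - x| := abs_pos.2 h0
      exact mem_Ioi.2 (by linarith)
  have hball : ∀ᶠ y in 𝓝[≠] x, x ∈ closedBall ((x + y)/2) (1 * (|y - x| / 2)) := by
    filter_upwards with y
    simp only [mem_closedBall, one_mul, Real.dist_eq]
    have h1 : x - (x + y)/2 = (x - y)/2 := by ring
    rw [h1, abs_div, abs_sub_comm y x]
    simp
  have key := hx (fun y : ℝ => (x + y)/2) (fun y : ℝ => |y - x| / 2) hδ hball
  rw [hasDerivAt_iff_tendsto_slope]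
  have hgx : g x = deriv w x := indicator_of_mem hmem _
  rw [tendsto_iff_norm_sub_tendsto_zero]
  apply squeeze_zero' (by filter_upwards with y using norm_nonneg _) _ key
  obtain ⟨ε, hε, hsub⟩ := Metric.isOpen_iff.1 isOpen_Ioo x hmem
  have hev : ∀ᶠ y in 𝓝[≠] x, y ∈ ball x ε ∧ y ≠ x := by
    filter_upwards [nhdsWithin_le_nhds (ball_mem_nhds x hε), self_mem_nhdsWithin] with y h1 h2
    exact ⟨h1, h2⟩
  filter_upwards [hev] with y ⟨hy, hyx⟩
  have hyd : -ε < y - x ∧ y - x < ε := abs_lt.1 (by simpa [Real.dist_eq] using hy)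
  have hxm : 0 < x ∧ x < T := ⟨hmem.1, hmem.2⟩
  have hIccsub : Icc (min x y) (max x y) ⊆ Ioo 0 T := by
    intro z hz
    apply hsub
    simp only [mem_ball, Real.dist_eq, abs_lt]
    rcases le_total x y with h | h
    · simp only [min_eq_left h, max_eq_right h] at hz
      exact ⟨by linarith [hz.1], by linarith [hz.2]⟩
    · simp only [min_eq_right h, max_eq_left h] at hz
      exact ⟨by linarith [hz.1], by linarith [hz.2]⟩
  -- memberships
  have hy0T : y ∈ Icc (0:ℝ) T := by
    constructor
    · rcases le_total x y with h | h <;> [linarith [hxm.1]; linarith [hyd.1, hxm.1, (hsub (show y ∈ ball x ε by simpa [mem_ball, Real.dist_eq, abs_lt] using hyd)).1]]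
    · linarith [(hsub (show y ∈ ball x ε by simpa [mem_ball, Real.dist_eq, abs_lt] using hyd)).2]
  have hx0T : x ∈ Icc (0:ℝ) T := ⟨hxm.1.le, hxm.2.le⟩
  have IIy : IntervalIntegrable (deriv w) volume 0 y := by
    apply hint.mono_set
    rw [uIcc_of_le hy0T.1, uIcc_of_le hT.le]
    exact Icc_subset_Icc le_rfl hy0T.2
  have IIx : IntervalIntegrable (deriv w) volume 0 x := by
    apply hint.mono_set
    rw [uIcc_of_le hx0T.1, uIcc_of_le hT.le]
    exact Icc_subset_Icc le_rfl hx0T.2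
  have hwy : w y - w x = ∫ s in x..y, deriv w s := by
    rw [hac y hy0T, hac x hx0T]
    have := integral_interval_sub_left IIy IIx
    linarith [this]
  have hcongr : ∫ s in x..y, deriv w s = ∫ s in x..y, g s := by
    apply intervalIntegral.integral_congr
    intro z hz
    have hz' : z ∈ Icc (min x y) (max x y) := hz
    exact (indicator_of_mem (hIccsub hz') (deriv w)).symm
  have hgiI : IntervalIntegrable g volume x y := hgi.intervalIntegrable
  have hslope : slope w x y - deriv w x = (y - x)⁻¹ * ∫ s in x..y, (g s - g x) := by
    rw [intervalIntegral.integral_sub hgiI (intervalIntegrable_const)]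
    rw [intervalIntegral.integral_const]
    rw [slope_def_field, ← hgx]
    rw [hcongr] at hwy
    rw [← hwy]
    have hne : y - x ≠ 0 := sub_ne_zero.2 hyx
    field_simp
    rw [smul_eq_mul]
  have hIcc_eq : closedBall ((x + y)/2) (|y - x| / 2) = Icc (min x y) (max x y) := by
    rw [Real.closedBall_eq_Icc]
    rcases le_total x y with h | h
    · rw [min_eq_left h, max_eq_right h, abs_of_nonneg (by linarith)]
      congr 1 <;> ring
    · rw [min_eq_right h, max_eq_left h, abs_of_nonpos (by linarith)]
      congr 1 <;> ring
  have hintnorm : IntegrableOn (fun z => ‖g z - g x‖) (Icc (min x y) (max x y)) volume :=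
    (hgi.integrableOn.sub (integrableOn_const measure_Icc_lt_top.ne)).norm
  have hmono : ∫ z in Ioc (min x y) (max x y), ‖g z - g x‖ ≤
      ∫ z in Icc (min x y) (max x y), ‖g z - g x‖ := by
    apply setIntegral_mono_set hintnorm
    · filter_upwards with z using norm_nonneg _
    · exact HasSubset.Subset.eventuallyLE Ioc_subset_Icc_self
  have habs : max x y - min x y = |y - x| := by
    rcases le_total x y with h | h
    · rw [min_eq_left h, max_eq_right h, abs_of_nonneg (by linarith)]
    · rw [min_eq_right h, max_eq_left h, abs_of_nonpos (by linarith)]; ring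
  have havg : ⨍ z in closedBall ((x + y)/2) (|y - x| / 2), ‖g z - g x‖ =
      |y - x|⁻¹ * ∫ z in Icc (min x y) (max x y), ‖g z - g x‖ := by
    rw [hIcc_eq, MeasureTheory.setAverage_eq volume (fun z => ‖g z - g x‖) (Icc (min x y) (max x y)), Real.volume_real_Icc, habs, smul_eq_mul,
      max_eq_left (abs_nonneg _)]
  rw [hslope, havg]
  have h1 : ‖(y - x)⁻¹ * ∫ s in x..y, (g s - g x)‖ =
      |y - x|⁻¹ * ‖∫ s in x..y, (g s - g x)‖ := by
    rw [norm_mul, norm_inv, Real.norm_eq_abs, Real.norm_eq_abs]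
  rw [h1]
  apply mul_le_mul_of_nonneg_left _ (inv_nonneg.2 (abs_nonneg (y - x)))
  calc ‖∫ s in x..y, (g s - g x)‖ ≤ ∫ z in Ioc (min x y) (max x y), ‖g z - g x‖ :=
        intervalIntegral.norm_integral_le_integral_norm_uIoc
    _ ≤ _ := hmono


lemma lemC {F : ℝ → ℝ} {u t : ℝ} (hut : u ≤ t) (hF : IntegrableOn F (Ioc u t) volume) :
    ∫ s in Ioc u t, F s * (∫ r in Ioc s t, F r) = (1/2) * (∫ s in Ioc u t, F s)^2 := by
  set μ := volume.restrict (Ioc u t) with hμ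
  have hFμ : Integrable F μ := hF
  have hFF : Integrable (fun z : ℝ × ℝ => F z.1 * F z.2) (μ.prod μ) := hFμ.mul_prod hFμ
  set D : ℝ × ℝ → ℝ := fun z => F z.1 * F z.2 * (if z.1 < z.2 then (1:ℝ) else 0) with hD
  set D' : ℝ × ℝ → ℝ := fun z => F z.1 * F z.2 * (if z.2 < z.1 then (1:ℝ) else 0) with hD'
  have hmeaslt : MeasurableSet {z : ℝ × ℝ | z.1 < z.2} := measurableSet_lt measurable_fst measurable_snd
  have hmeasgt : MeasurableSet {z : ℝ × ℝ | z.2 < z.1} := measurableSet_lt measurable_snd measurable_fst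
  have hDi : Integrable D (μ.prod μ) := by
    have : D = fun z => (if z.1 < z.2 then (1:ℝ) else 0) * (F z.1 * F z.2) := by
      funext z; ring
    rw [this]
    apply hFF.bdd_mul (c := 1)
    · exact ((measurable_one.indicator hmeaslt).stronglyMeasurable.aestronglyMeasurable).congr
        (by filter_upwards with z; simp [indicator_apply])
    · exact Filter.Eventually.of_forall fun z => by split <;> simp
  have hD'i : Integrable D' (μ.prod μ) := by
    have : D' = fun z => (if z.2 < z.1 then (1:ℝ) else 0) * (F z.1 * F z.2) := by
      funext z; ring
    rw [this]
    apply hFF.bdd_mul (c := 1)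
    · exact ((measurable_one.indicator hmeasgt).stronglyMeasurable.aestronglyMeasurable).congr
        (by filter_upwards with z; simp [indicator_apply])
    · exact Filter.Eventually.of_forall fun z => by split <;> simp
  -- swap symmetry
  have hswap : ∫ z, D' z ∂(μ.prod μ) = ∫ z, D z ∂(μ.prod μ) := by
    rw [← MeasureTheory.integral_prod_swap D]
    congr 1
    funext z
    simp only [hD, hD', Prod.fst_swap, Prod.snd_swap, Prod.swap]
    ring
  -- diagonal is null
  have hdiag : (μ.prod μ) {z : ℝ × ℝ | z.1 = z.2} = 0 := by
    have hms : MeasurableSet {z : ℝ × ℝ | z.1 = z.2} := measurableSet_eq_fun measurable_fst measurable_snd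
    rw [Measure.prod_apply hms]
    have : ∀ x : ℝ, μ (Prod.mk x ⁻¹' {z : ℝ × ℝ | z.1 = z.2}) = 0 := by
      intro x
      have : Prod.mk x ⁻¹' {z : ℝ × ℝ | z.1 = z.2} = {x} := by
        ext y; simp [eq_comm]
      rw [this]
      exact le_antisymm (le_trans (Measure.restrict_le_self _) (by simp)) zero_le
    simp [this]
  have hsum : ∫ z, D z ∂(μ.prod μ) + ∫ z, D' z ∂(μ.prod μ) = (∫ s in Ioc u t, F s)^2 := by
    rw [← integral_add hDi hD'i]
    have : ∫ z, (D z + D' z) ∂(μ.prod μ) = ∫ z, F z.1 * F z.2 ∂(μ.prod μ) := by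
      apply MeasureTheory.integral_congr_ae
      have : ∀ᵐ z ∂(μ.prod μ), z.1 ≠ z.2 := by
        rw [ae_iff]
        convert hdiag using 2
        ext z; simp
      filter_upwards [this] with z hz
      rcases lt_or_gt_of_ne hz with h | h
      · simp [hD, hD', h, not_lt.2 h.le]
      · simp [hD, hD', h, not_lt.2 h.le]
    rw [this, MeasureTheory.integral_prod_mul F F, sq]
  -- D integral as iterated
  have hDit : ∫ z, D z ∂(μ.prod μ) = ∫ s in Ioc u t, F s * (∫ r in Ioc s t, F r) := by
    rw [MeasureTheory.integral_prod D hDi]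
    apply setIntegral_congr_fun measurableSet_Ioc
    intro s hs
    have h1 : ∀ r, D (s, r) = (Ioi s).indicator (fun r => F s * F r) r := by
      intro r
      simp only [hD, indicator_apply, mem_Ioi]
      split <;> simp_all <;> ring
    simp only [h1]
    rw [MeasureTheory.setIntegral_indicator measurableSet_Ioi]
    have : Ioc u t ∩ Ioi s = Ioc s t := by
      ext r; simp only [mem_inter_iff, mem_Ioc, mem_Ioi]
      constructor
      · rintro ⟨⟨_, h2⟩, h3⟩; exact ⟨h3, h2⟩
      · rintro ⟨h1', h2⟩; exact ⟨⟨lt_of_le_of_lt hs.1.le h1', h2⟩, h1'⟩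
    rw [this, MeasureTheory.integral_const_mul]
  have h2D : 2 * ∫ z, D z ∂(μ.prod μ) = (∫ s in Ioc u t, F s)^2 := by
    rw [two_mul]; nth_rewrite 2 [← hswap]; exact hsum
  rw [← hDit]
  linarith


-- integrability of the kernel on (s, T]
lemma ker_int {γ : ℝ} (hγ : γ ∈ Ioo (0:ℝ) 1) (s b : ℝ) :
    IntervalIntegrable (fun r : ℝ => (r - s) ^ (-γ)) volume s b := by
  have h := intervalIntegral.intervalIntegrable_rpow' (a := s - s) (b := b - s) (r := -γ)
    (by linarith [hγ.2])
  have := IntervalIntegrable.comp_sub_right h s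
  simpa using this

lemma ker_val {γ : ℝ} (hγ : γ ∈ Ioo (0:ℝ) 1) {s b : ℝ} (hsb : s ≤ b) :
    ∫ r in s..b, (r - s) ^ (-γ) = (b - s) ^ (1 - γ) / (1 - γ) := by
  have h1 : ∫ r in s..b, (r - s) ^ (-γ) = ∫ r in s - s..b - s, r ^ (-γ) := by
    rw [← intervalIntegral.integral_comp_sub_right (fun r => r ^ (-γ)) s]
  rw [h1]
  simp only [sub_self]
  rw [integral_rpow (Or.inl (by linarith [hγ.2]))]
  rw [Real.zero_rpow (by intro h; rw [← h] at hγ; linarith [hγ.1, hγ.2, h]; )]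
  ring_nf

lemma lemB {γ T : ℝ} (hγ : γ ∈ Ioo (0:ℝ) 1) (hT : 0 < T) {F : ℝ → ℝ}
    (hF : IntegrableOn F (Ioc 0 T) volume) :
    ∀ᵐ t ∂(volume.restrict (Ioo (0:ℝ) T)),
      IntegrableOn (fun s => F s * (t - s) ^ (-γ)) (Ioc 0 t) volume := by
  set μ := volume.restrict (Ioc (0:ℝ) T) with hμ
  set ν := volume.restrict (Ioo (0:ℝ) T) with hν
  set H : ℝ × ℝ → ℝ := fun p => if p.1 < p.2 then F p.1 * (p.2 - p.1) ^ (-γ) else 0 with hH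
  have hγ1 : (0:ℝ) < 1 - γ := by linarith [hγ.2]
  have hγ0 : -γ ≠ 0 := by intro h; rw [neg_eq_zero] at h; exact absurd h (ne_of_gt hγ.1)
  have hmeaslt : MeasurableSet {p : ℝ × ℝ | p.1 < p.2} :=
    measurableSet_lt measurable_fst measurable_snd
  have hHm : AEStronglyMeasurable H (μ.prod ν) := by
    have h1 : AEStronglyMeasurable (fun p : ℝ × ℝ => F p.1 * (p.2 - p.1) ^ (-γ)) (μ.prod ν) :=
      hF.aestronglyMeasurable.comp_fst.mul
        (((measurable_snd.sub measurable_fst).pow_const (-γ)).aestronglyMeasurable)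
    have h2 := h1.indicator hmeaslt
    apply h2.congr
    filter_upwards with p
    simp only [indicator_apply, hH, mem_setOf_eq]
  have hsec : ∀ s : ℝ, Integrable (fun t => H (s, t)) ν := by
    intro s
    have h1 : (fun t => H (s, t)) =
        fun t => F s * (Ioi s).indicator (fun r => (r - s) ^ (-γ)) t := by
      funext t
      simp only [hH, indicator_apply, mem_Ioi]
      split <;> simp
    rw [h1]
    apply Integrable.const_mul
    rw [integrable_indicator_iff measurableSet_Ioi]
    have : IntegrableOn (fun r => (r - s) ^ (-γ)) (Ioc s T) volume := (ker_int hγ s T).1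
    have h2 : IntegrableOn (fun r => (r - s) ^ (-γ)) (Ioi s ∩ Ioo 0 T) volume :=
      this.mono_set (fun r hr => ⟨hr.1, hr.2.2.le⟩)
    rw [hν, IntegrableOn, Measure.restrict_restrict measurableSet_Ioi]
    exact h2
  set C : ℝ := T ^ (1 - γ) / (1 - γ) with hC
  have hCnn : 0 ≤ C := div_nonneg (Real.rpow_nonneg hT.le _) hγ1.le
  have hbound : ∀ s ∈ Ioc (0:ℝ) T, ∫ t, ‖H (s, t)‖ ∂ν ≤ |F s| * C := by
    intro s hs
    have heq : (fun t => ‖H (s, t)‖) =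
        fun t => |F s| * (Ioi s).indicator (fun r => (r - s) ^ (-γ)) t := by
      funext t
      simp only [hH, indicator_apply, mem_Ioi, Real.norm_eq_abs]
      split_ifs with h
      · rw [abs_mul, abs_of_nonneg (Real.rpow_nonneg (by linarith) _)]
      · simp
    rw [heq, MeasureTheory.integral_const_mul]
    apply mul_le_mul_of_nonneg_left _ (abs_nonneg _)
    have h1 : ∫ t, (Ioi s).indicator (fun r => (r - s) ^ (-γ)) t ∂ν =
        ∫ t in Ioi s ∩ Ioo 0 T, (t - s) ^ (-γ) := by
      rw [hν, MeasureTheory.integral_indicator measurableSet_Ioi, Measure.restrict_restrict measurableSet_Ioi]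
    rw [h1]
    have h2 : ∫ t in Ioi s ∩ Ioo 0 T, (t - s) ^ (-γ) ≤ ∫ t in Ioc s T, (t - s) ^ (-γ) := by
      apply setIntegral_mono_set (ker_int hγ s T).1
      · filter_upwards [ae_restrict_mem measurableSet_Ioc] with t ht
        exact Real.rpow_nonneg (by linarith [ht.1]) _
      · exact HasSubset.Subset.eventuallyLE (fun r hr => ⟨hr.1, hr.2.2.le⟩)
    apply le_trans h2
    rw [← intervalIntegral.integral_of_le hs.2, ker_val hγ hs.2, hC]
    exact (div_le_div_iff_of_pos_right hγ1).2
      (Real.rpow_le_rpow (by linarith [hs.1, hs.2]) (by linarith [hs.1, hs.2]) hγ1.le)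
  have hHI : Integrable H (μ.prod ν) := by
    rw [MeasureTheory.integrable_prod_iff hHm]
    refine ⟨by filter_upwards with s using hsec s, ?_⟩
    apply Integrable.mono (hF.norm.mul_const C) hHm.norm.integral_prod_right'
    filter_upwards [ae_restrict_mem measurableSet_Ioc] with s hs
    have h0 : (0:ℝ) ≤ ∫ t, ‖H (s, t)‖ ∂ν := integral_nonneg fun t => norm_nonneg _
    rw [Real.norm_eq_abs, abs_of_nonneg h0, Real.norm_eq_abs,
      abs_of_nonneg (mul_nonneg (norm_nonneg _) hCnn), Real.norm_eq_abs]
    exact hbound s hs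
  filter_upwards [hHI.prod_left_ae, ae_restrict_mem measurableSet_Ioo] with t hts htm
  have h1 : IntegrableOn (fun s => H (s, t)) (Ioc 0 T) volume := hts
  have h2 : IntegrableOn (fun s => H (s, t)) (Ioc 0 t) volume :=
    h1.mono_set (Ioc_subset_Ioc le_rfl htm.2.le)
  apply IntegrableOn.congr_fun h2 _ measurableSet_Ioc
  intro s' hs'
  rcases lt_or_eq_of_le hs'.2 with h | h
  · simp [hH, h]
  · simp [hH, h, lt_irrefl, Real.zero_rpow hγ0]




lemma lemD {F W : ℝ → ℝ} {u t : ℝ} (hut : u ≤ t)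
    (hWF : ∀ a b : ℝ, W b - W a = ∫ r in a..b, F r)
    (hF : IntegrableOn F (Ioc u t) volume) :
    0 ≤ ∫ s in Ioc u t, (W t - W s) * F s := by
  have h1 : ∫ s in Ioc u t, (W t - W s) * F s = ∫ s in Ioc u t, F s * (∫ r in Ioc s t, F r) := by
    apply setIntegral_congr_fun measurableSet_Ioc
    intro s hs
    dsimp only
    rw [← intervalIntegral.integral_of_le hs.2, ← hWF s t]
    ring
  rw [h1, lemC hut hF]
  positivity

lemma lemP {γ t : ℝ} (hγ : γ ∈ Ioo (0:ℝ) 1) (ht : 0 < t) {F W : ℝ → ℝ}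
    (hWc : Continuous W)
    (hWF : ∀ a b : ℝ, W b - W a = ∫ r in a..b, F r)
    (hFi : IntegrableOn F (Ioc 0 t) volume)
    (hker : IntegrableOn (fun s => F s * (t - s) ^ (-γ)) (Ioc 0 t) volume) :
    0 ≤ ∫ s in Ioc 0 t, (W t - W s) * (F s * (t - s) ^ (-γ)) := by
  set q : ℝ → ℝ := fun u => γ * (t - u) ^ (-(γ+1)) with hq
  set h : ℝ → ℝ := fun s => (W t - W s) * F s with hh
  set c : ℝ := t ^ (-γ) with hc
  have hcnn : 0 ≤ c := Real.rpow_nonneg ht.le _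
  have hqnn : ∀ u ≤ t, 0 ≤ q u := fun u hu =>
    mul_nonneg hγ.1.le (Real.rpow_nonneg (by linarith) _)
  -- bound on W t - W ·
  obtain ⟨C, hC⟩ : ∃ C, ∀ x ∈ Icc (0:ℝ) t, ‖W t - W x‖ ≤ C :=
    isCompact_Icc.exists_bound_of_continuousOn (continuous_const.sub hWc).continuousOn
  have hCnn : 0 ≤ C := le_trans (norm_nonneg _) (hC 0 ⟨le_refl _, ht.le⟩)
  have haesm_h : AEStronglyMeasurable h (volume.restrict (Ioc 0 t)) :=
    ((continuous_const.sub hWc).aestronglyMeasurable).mul hFi.aestronglyMeasurable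
  have hmemIcc : ∀ᵐ s ∂(volume.restrict (Ioc 0 t)), s ∈ Ioc 0 t := ae_restrict_mem measurableSet_Ioc
  have hh_int : IntegrableOn h (Ioc 0 t) volume := by
    apply Integrable.mono (hFi.norm.const_mul C) haesm_h
    filter_upwards [hmemIcc] with s hs
    rw [hh, norm_mul]
    have : ‖W t - W s‖ ≤ C := hC s ⟨hs.1.le, hs.2⟩
    calc ‖W t - W s‖ * ‖F s‖ ≤ C * ‖F s‖ := by gcongr
      _ ≤ ‖C * ‖F s‖‖ := le_abs_self _
  have hhk_int : IntegrableOn (fun s => h s * (t - s) ^ (-γ)) (Ioc 0 t) volume := by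
    have : (fun s => h s * (t - s) ^ (-γ)) = fun s => (W t - W s) * (F s * (t - s) ^ (-γ)) := by
      funext s; rw [hh]; ring
    rw [this]
    apply Integrable.mono (hker.norm.const_mul C)
      (((continuous_const.sub hWc).aestronglyMeasurable).mul hker.aestronglyMeasurable)
    filter_upwards [hmemIcc] with s hs
    rw [Pi.mul_apply, norm_mul]
    calc ‖W t - W s‖ * ‖F s * (t-s)^(-γ)‖ ≤ C * ‖F s * (t-s)^(-γ)‖ := by
          gcongr; exact hC s ⟨hs.1.le, hs.2⟩
      _ ≤ ‖C * ‖F s * (t-s)^(-γ)‖‖ := le_abs_self _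
  -- kernel decomposition
  have hkd : ∀ s ∈ Ioo (0:ℝ) t, ∫ u in Ioc 0 s, q u = (t - s) ^ (-γ) - c := by
    intro s hs
    have hderiv : ∀ u ∈ uIcc (0:ℝ) s, HasDerivAt (fun u => (t - u) ^ (-γ)) (q u) u := by
      intro u hu
      rw [uIcc_of_le hs.1.le] at hu
      have htu : 0 < t - u := by linarith [hu.2, hs.2]
      have h1 : HasDerivAt (fun u : ℝ => t - u) (-1) u := (hasDerivAt_id u).const_sub t
      have h2 := (Real.hasDerivAt_rpow_const (x := t - u) (p := -γ) (Or.inl (ne_of_gt htu))).comp u h1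
      refine h2.congr_deriv ?_
      rw [hq]
      simp only
      ring_nf
    have hcont : ContinuousOn q (uIcc (0:ℝ) s) := by
      rw [uIcc_of_le hs.1.le]
      apply ContinuousOn.mul continuousOn_const
      apply ContinuousOn.rpow_const (continuous_const.sub continuous_id).continuousOn
      intro u hu
      left
      have : 0 < t - u := by linarith [hu.2, hs.2]
      exact ne_of_gt this
    have hFTC := intervalIntegral.integral_eq_sub_of_hasDerivAt hderiv hcont.intervalIntegrable
    rw [← intervalIntegral.integral_of_le hs.1.le, hFTC, hc, sub_zero]
  -- rewrite goal in terms of h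
  have hgoal_eq : ∫ s in Ioc 0 t, (W t - W s) * (F s * (t - s) ^ (-γ))
      = ∫ s in Ioc 0 t, h s * (t - s) ^ (-γ) := by
    apply setIntegral_congr_fun measurableSet_Ioc
    intro s hs
    simp only [hh]
    ring
  rw [hgoal_eq]
  have hsplit : ∫ s in Ioc 0 t, h s * (t - s) ^ (-γ)
      = (∫ s in Ioc 0 t, h s * c) + ∫ s in Ioc 0 t, h s * ((t - s) ^ (-γ) - c) := by
    rw [← MeasureTheory.integral_add (hh_int.mul_const c)]
    · apply setIntegral_congr_fun measurableSet_Ioc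
      intro s hs
      simp only
      ring
    · have he : (fun s => h s * ((t - s) ^ (-γ) - c)) =
          fun s => h s * (t-s)^(-γ) - h s * c := by funext s; ring
      rw [he]
      exact hhk_int.sub (hh_int.mul_const c)
  rw [hsplit]
  have term1 : 0 ≤ ∫ s in Ioc 0 t, h s * c := by
    rw [MeasureTheory.integral_mul_const]
    apply mul_nonneg _ hcnn
    have := lemD ht.le hWF hFi
    simpa [hh] using this
  -- inner kernel integral
  have hQint : ∀ s ∈ Ioo (0:ℝ) t, ∫ u in Ioc 0 t, (Iio s).indicator q u = (t - s) ^ (-γ) - c := by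
    intro s hs
    rw [MeasureTheory.integral_indicator measurableSet_Iio,
      Measure.restrict_restrict measurableSet_Iio]
    have hseteq : Iio s ∩ Ioc 0 t = Ioo 0 s := by
      ext u
      simp only [mem_inter_iff, mem_Ioc, mem_Iio, mem_Ioo]
      constructor
      · rintro ⟨a, b, _⟩; exact ⟨b, a⟩
      · rintro ⟨a, b⟩; exact ⟨b, a, le_trans b.le hs.2.le⟩
    rw [hseteq, ← MeasureTheory.integral_Ioc_eq_integral_Ioo, hkd s hs]
  set G : ℝ → ℝ → ℝ := fun s u => h s * (if u < s then q u else 0) with hG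
  have hGrow : ∀ s ∈ Ioo (0:ℝ) t, ∫ u in Ioc 0 t, G s u = h s * ((t - s) ^ (-γ) - c) := by
    intro s hs
    simp only [hG]
    rw [MeasureTheory.integral_const_mul]
    congr 1
    rw [← hQint s hs]
    apply setIntegral_congr_fun measurableSet_Ioc
    intro u _
    simp [indicator_apply, mem_Iio]
  have term2 : 0 ≤ ∫ s in Ioc 0 t, h s * ((t - s) ^ (-γ) - c) := by
    rw [MeasureTheory.integral_Ioc_eq_integral_Ioo]
    have hIoo_eq : ∫ s in Ioo 0 t, h s * ((t-s)^(-γ) - c) = ∫ s in Ioo 0 t, ∫ u in Ioc 0 t, G s u := by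
      apply setIntegral_congr_fun measurableSet_Ioo
      intro s hs
      exact (hGrow s hs).symm
    rw [hIoo_eq]
    set μo := volume.restrict (Ioo (0:ℝ) t) with hμo
    set μi := volume.restrict (Ioc (0:ℝ) t) with hμi
    have haesmG : AEStronglyMeasurable (Function.uncurry G) (μo.prod μi) := by
      have h1 : AEStronglyMeasurable (fun p : ℝ × ℝ => h p.1) (μo.prod μi) :=
        (haesm_h.mono_measure (Measure.restrict_mono Ioo_subset_Ioc_self le_rfl)).comp_fst
      have hm : Measurable (fun p : ℝ × ℝ => q p.2) :=
        ((measurable_const.sub measurable_snd).pow_const _).const_mul γ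
      have hms : MeasurableSet {p : ℝ × ℝ | p.2 < p.1} :=
        measurableSet_lt measurable_snd measurable_fst
      have h2 : AEStronglyMeasurable (fun p : ℝ × ℝ => if p.2 < p.1 then q p.2 else 0)
          (μo.prod μi) := by
        apply ((hm.indicator hms).stronglyMeasurable.aestronglyMeasurable).congr
        filter_upwards with p
        simp only [indicator_apply, mem_setOf_eq]
      exact (h1.mul h2).congr (by filter_upwards with p; rfl)
    have hGint : Integrable (Function.uncurry G) (μo.prod μi) := by
      rw [MeasureTheory.integrable_prod_iff haesmG]
      constructor
      · filter_upwards [ae_restrict_mem measurableSet_Ioo] with s hs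
        have he : (fun u => Function.uncurry G (s, u)) =
            fun u => h s * ((Iio s).indicator q u) := by
          funext u
          simp [Function.uncurry, hG, indicator_apply, mem_Iio]
        rw [he]
        apply Integrable.const_mul
        rw [integrable_indicator_iff measurableSet_Iio, hμi, IntegrableOn,
          Measure.restrict_restrict measurableSet_Iio]
        have hqc : ContinuousOn q (Icc (0:ℝ) s) := by
          apply ContinuousOn.mul continuousOn_const
          apply ContinuousOn.rpow_const (continuous_const.sub continuous_id).continuousOn
          intro u hu
          left
          have : 0 < t - u := by linarith [hu.2, hs.2]
          exact ne_of_gt this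
        have hqint : IntegrableOn q (Icc 0 s) volume := hqc.integrableOn_Icc
        apply hqint.mono_set
        intro u hu
        exact ⟨hu.2.1.le, hu.1.le⟩
      · apply Integrable.mono ((hhk_int.mono_set Ioo_subset_Ioc_self).norm)
          haesmG.norm.integral_prod_right'
        filter_upwards [ae_restrict_mem measurableSet_Ioo] with s hs
        have he : (fun u => ‖Function.uncurry G (s, u)‖) =
            fun u => |h s| * ((Iio s).indicator q u) := by
          funext u
          simp only [Function.uncurry, hG, indicator_apply, mem_Iio, Real.norm_eq_abs]
          split_ifs with hlt
          · rw [abs_mul, abs_of_nonneg (hqnn u (by linarith [hs.2]))]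
          · simp
        rw [Real.norm_eq_abs, abs_of_nonneg (integral_nonneg fun u => norm_nonneg _)]
        simp only [he]
        rw [MeasureTheory.integral_const_mul, hμi, hQint s hs]
        have hk0 : (0:ℝ) ≤ (t - s)^(-γ) := Real.rpow_nonneg (by linarith [hs.2]) _
        have : |h s| * ((t - s) ^ (-γ) - c) ≤ |h s| * (t - s) ^ (-γ) := by
          apply mul_le_mul_of_nonneg_left _ (abs_nonneg _)
          linarith
        apply le_trans this
        rw [norm_norm, Real.norm_eq_abs]
        have habs : |h s * (t-s)^(-γ)| = |h s| * (t-s)^(-γ) := by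
          rw [abs_mul, abs_of_nonneg hk0]
        rw [habs]
    rw [MeasureTheory.integral_integral_swap hGint]
    apply setIntegral_nonneg measurableSet_Ioc
    intro u hu
    have he : (fun s => G s u) = fun s => (Ioi u).indicator (fun s => h s * q u) s := by
      funext s'
      simp only [hG, indicator_apply, mem_Ioi]
      split_ifs <;> simp
    rw [he, MeasureTheory.integral_indicator measurableSet_Ioi, hμo,
      Measure.restrict_restrict measurableSet_Ioi]
    have hseteq : Ioi u ∩ Ioo 0 t = Ioo u t := by
      ext s'
      simp only [mem_inter_iff, mem_Ioi, mem_Ioo]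
      constructor
      · rintro ⟨a, _, b⟩; exact ⟨a, b⟩
      · rintro ⟨a, b⟩; exact ⟨a, lt_trans hu.1 a, b⟩
    rw [hseteq, MeasureTheory.integral_mul_const]
    apply mul_nonneg _ (hqnn u hu.2)
    rw [← MeasureTheory.integral_Ioc_eq_integral_Ioo]
    have := lemD hu.2 hWF (hFi.mono_set (Ioc_subset_Ioc hu.1.le le_rfl))
    simpa [hh] using this
  linarith

/-- **Alikhanov's lemma**: for `γ ∈ (0,1)` and an absolutely continuous `w` on `[0,T]`
(encoded via the fundamental theorem of calculus with integrable derivative),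
`(∂_t^γ w)(t) · w(t) ≥ ½ (∂_t^γ (w²))(t)` for a.e. `t ∈ (0,T)`. -/
theorem alikhanov_lemma (γ T : ℝ) (hγ : γ ∈ Set.Ioo (0:ℝ) 1) (hT : 0 < T)
    (w : ℝ → ℝ)
    (hac : ∀ t ∈ Set.Icc (0:ℝ) T, w t = w 0 + ∫ s in (0:ℝ)..t, deriv w s)
    (hint : IntervalIntegrable (deriv w) volume 0 T)
    (hac2 : ∀ t ∈ Set.Icc (0:ℝ) T,
      (w t) ^ 2 = (w 0) ^ 2 + ∫ s in (0:ℝ)..t, deriv (fun r => (w r) ^ 2) s)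
    (hint2 : IntervalIntegrable (deriv (fun r => (w r) ^ 2)) volume 0 T) :
    ∀ᵐ t ∂(volume.restrict (Set.Ioo (0:ℝ) T)),
      caputo γ w t * w t ≥ (1 / 2) * caputo γ (fun r => (w r) ^ 2) t := by
  have hγ1 : (0:ℝ) < 1 - γ := by linarith [hγ.2]
  -- setup: globally integrable versions of the derivatives, and the continuous primitive W
  set Fw : ℝ → ℝ := (Icc (0:ℝ) T).indicator (deriv w) with hFwdef
  set G2 : ℝ → ℝ := (Icc (0:ℝ) T).indicator (deriv (fun r => (w r) ^ 2)) with hG2def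
  have hFwInt : Integrable Fw volume := by
    rw [hFwdef, integrable_indicator_iff measurableSet_Icc]
    exact (integrableOn_Icc_iff_integrableOn_Ioc (by simp)).2 hint.1
  have hG2Int : Integrable G2 volume := by
    rw [hG2def, integrable_indicator_iff measurableSet_Icc]
    exact (integrableOn_Icc_iff_integrableOn_Ioc (by simp)).2 hint2.1
  set W : ℝ → ℝ := fun s => w 0 + ∫ r in (0:ℝ)..s, Fw r with hWdef
  have hWcont : Continuous W := continuous_const.add
    (intervalIntegral.continuous_primitive (fun a b => hFwInt.intervalIntegrable) 0)
  have hWeq : ∀ s ∈ Icc (0:ℝ) T, w s = W s := by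
    intro s hs
    rw [hac s hs, hWdef]
    congr 1
    apply intervalIntegral.integral_congr
    intro z hz
    rw [uIcc_of_le hs.1] at hz
    exact (indicator_of_mem (Icc_subset_Icc le_rfl hs.2 hz) (deriv w)).symm
  have hWF : ∀ a b : ℝ, W b - W a = ∫ r in a..b, Fw r := by
    intro a b
    rw [hWdef]
    simp only
    rw [add_sub_add_left_eq_sub]
    exact intervalIntegral.integral_interval_sub_left hFwInt.intervalIntegrable
      hFwInt.intervalIntegrable
  -- a.e. differentiability and chain rule
  have haediff := lemA hT hac hint
  have hae2 : ∀ᵐ x ∂(volume.restrict (Ioo (0:ℝ) T)),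
      deriv (fun r => (w r) ^ 2) x = 2 * w x * deriv w x := by
    filter_upwards [haediff] with x hx
    have := (hx.fun_pow 2).deriv
    rw [this]
    push_cast
    ring
  have hae2' : ∀ᵐ x ∂(volume : Measure ℝ), x ∈ Ioo (0:ℝ) T →
      deriv (fun r => (w r) ^ 2) x = 2 * w x * deriv w x :=
    (ae_restrict_iff' measurableSet_Ioo).1 hae2
  -- W·Fw is integrable on (0,T]
  obtain ⟨C, hC⟩ : ∃ C, ∀ x ∈ Icc (0:ℝ) T, ‖W x‖ ≤ C :=
    isCompact_Icc.exists_bound_of_continuousOn hWcont.continuousOn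
  have hWFwInt : IntegrableOn (fun s => W s * Fw s) (Ioc 0 T) volume := by
    have hCnn : 0 ≤ C := le_trans (norm_nonneg _) (hC 0 ⟨le_rfl, hT.le⟩)
    apply Integrable.mono (hFwInt.integrableOn.norm.const_mul C)
      ((hWcont.aestronglyMeasurable.restrict).mul hFwInt.aestronglyMeasurable.restrict)
    filter_upwards [ae_restrict_mem measurableSet_Ioc] with s hs
    rw [Pi.mul_apply, norm_mul]
    calc ‖W s‖ * ‖Fw s‖ ≤ C * ‖Fw s‖ :=
          mul_le_mul_of_nonneg_right (hC s ⟨hs.1.le, hs.2⟩) (norm_nonneg _)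
      _ = ‖C‖ * ‖‖Fw s‖‖ := by rw [Real.norm_eq_abs C, abs_of_nonneg hCnn, norm_norm]
      _ ≤ ‖C * ‖Fw s‖‖ := le_of_eq (norm_mul _ _).symm
  -- the a.e. t statement
  filter_upwards [lemB hγ hT hFwInt.integrableOn, lemB hγ hT hG2Int.integrableOn,
    lemB hγ hT hWFwInt, ae_restrict_mem measurableSet_Ioo] with t hkerF hkerG hkerWF htm
  have ht : 0 < t := htm.1
  have htT : t < T := htm.2
  have htIcc : t ∈ Icc (0:ℝ) T := ⟨ht.le, htT.le⟩
  have hsubIcc : Ioc (0:ℝ) t ⊆ Icc (0:ℝ) T := fun s hs => ⟨hs.1.le, le_trans hs.2 htT.le⟩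
  -- caputo integrals as set integrals
  have hA : ∫ s in (0:ℝ)..t, deriv w s / (t - s) ^ γ
      = ∫ s in Ioc (0:ℝ) t, Fw s * (t - s) ^ (-γ) := by
    rw [intervalIntegral.integral_of_le ht.le]
    apply setIntegral_congr_fun measurableSet_Ioc
    intro s hs
    rw [hFwdef]
    simp only [indicator_of_mem (hsubIcc hs) (deriv w)]
    rw [div_eq_mul_inv, Real.rpow_neg (by linarith [hs.2] : (0:ℝ) ≤ t - s)]
  have hB : ∫ s in (0:ℝ)..t, deriv (fun r => (w r) ^ 2) s / (t - s) ^ γ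
      = ∫ s in Ioc (0:ℝ) t, G2 s * (t - s) ^ (-γ) := by
    rw [intervalIntegral.integral_of_le ht.le]
    apply setIntegral_congr_fun measurableSet_Ioc
    intro s hs
    rw [hG2def]
    simp only [indicator_of_mem (hsubIcc hs) (deriv (fun r => (w r) ^ 2))]
    rw [div_eq_mul_inv, Real.rpow_neg (by linarith [hs.2] : (0:ℝ) ≤ t - s)]
  -- rewrite the G2 integral using the chain rule a.e.
  have hBval : ∫ s in Ioc (0:ℝ) t, G2 s * (t - s) ^ (-γ)
      = 2 * ∫ s in Ioc (0:ℝ) t, W s * Fw s * (t - s) ^ (-γ) := by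
    rw [← MeasureTheory.integral_const_mul]
    apply MeasureTheory.integral_congr_ae
    have h1 : ∀ᵐ s ∂(volume.restrict (Ioc (0:ℝ) t)), s ∈ Ioo (0:ℝ) T →
        deriv (fun r => (w r) ^ 2) s = 2 * w s * deriv w s := ae_restrict_of_ae hae2'
    filter_upwards [h1, ae_restrict_mem measurableSet_Ioc] with s hs1 hs2
    have hsIoo : s ∈ Ioo (0:ℝ) T := ⟨hs2.1, lt_of_le_of_lt hs2.2 htT⟩
    have hsIcc : s ∈ Icc (0:ℝ) T := ⟨hs2.1.le, hsIoo.2.le⟩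
    rw [hG2def]
    simp only [indicator_of_mem hsIcc]
    rw [hs1 hsIoo, hFwdef]
    simp only [indicator_of_mem hsIcc]
    rw [← hWeq s hsIcc]
    ring
  -- main inequality
  have hmain : 0 ≤ ∫ s in Ioc (0:ℝ) t, (W t - W s) * (Fw s * (t - s) ^ (-γ)) :=
    lemP hγ ht hWcont hWF hFwInt.integrableOn hkerF
  have hsplit : ∫ s in Ioc (0:ℝ) t, (W t - W s) * (Fw s * (t - s) ^ (-γ))
      = W t * (∫ s in Ioc (0:ℝ) t, Fw s * (t - s) ^ (-γ))
        - ∫ s in Ioc (0:ℝ) t, W s * Fw s * (t - s) ^ (-γ) := by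
    rw [← MeasureTheory.integral_const_mul, ← MeasureTheory.integral_sub]
    · apply setIntegral_congr_fun measurableSet_Ioc
      intro s hs
      ring
    · exact hkerF.const_mul (W t)
    · exact hkerWF
  -- put everything together
  have hΓpos : 0 < Real.Gamma (1 - γ) := Real.Gamma_pos_of_pos hγ1
  have hwt : w t = W t := hWeq t htIcc
  rw [ge_iff_le]
  show (1 / 2) * caputo γ (fun r => (w r) ^ 2) t ≤ caputo γ w t * w t
  rw [caputo, caputo, hA, hB, hBval, hwt]
  rw [hsplit] at hmain
  have hinv : 0 < 1 / Real.Gamma (1 - γ) := by positivity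
  set X := ∫ s in Ioc (0:ℝ) t, Fw s * (t - s) ^ (-γ)
  set Y := ∫ s in Ioc (0:ℝ) t, W s * Fw s * (t - s) ^ (-γ)
  have h2 : Y ≤ W t * X := by linarith
  calc (1 / 2) * (1 / Real.Gamma (1 - γ) * (2 * Y)) = 1 / Real.Gamma (1 - γ) * Y := by ring
    _ ≤ 1 / Real.Gamma (1 - γ) * (W t * X) := by
        exact mul_le_mul_of_nonneg_left h2 hinv.le
    _ = 1 / Real.Gamma (1 - γ) * X * W t := by ring
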